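/- If rpl(T_i) = rpl(T_{i+1}) = 1 and T_i can be derived from T_{i+1} by deleting a leaf and appending a leaf, then C(T_i,2) can be derived from C(T_{i+1},2) by deleting a leaf and appending a leaf. -/
import Mathlib


/-- An ordered (plane) tree: a root together with the list of subtrees of its
children.  The children are listed **rightmost first** (so the head of the
list is the rightmost child). -/
inductive OTree : Type
  | node : List OTree → OTree

namespace OTree

-- Number of vertices of an ordered tree.
mutual
  def size : OTree → ℕ
    | .node ts => 1 + sizeAux ts
  def sizeAux : List OTree → ℕ
    | [] => 0
    | t :: ts => size t + sizeAux ts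
end

/-- `rpl T` is the number of edges of the rightmost path of `T`
(the path from the root that always follows the rightmost child). -/
def rpl : OTree → ℕ
  | .node [] => 0
  | .node (t :: _) => 1 + rpl t

/-- `p T` removes the rightmost leaf of `T` (the endpoint of the rightmost
path).  On the one-vertex tree it is the identity (junk value). -/
def p : OTree → OTree
  | .node [] => .node []
  | .node (.node [] :: ts) => .node ts
  | .node (.node (c :: cs) :: ts) => .node (p (.node (c :: cs)) :: ts)

/-- `C T i` appends a new leaf as the rightmost child of the vertex at
level `i` on the rightmost path of `T` (the root has level 1).
Junk values are returned when `i = 0` or `i` exceeds `rpl T + 1`. -/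
def C : OTree → ℕ → OTree
  | t, 0 => t
  | .node ts, 1 => .node (.node [] :: ts)
  | .node [], _ + 2 => .node []
  | .node (t :: ts), n + 2 => .node (C t (n + 1) :: ts)

/-- The number of children of the parent of the rightmost leaf
(junk value `0` on the one-vertex tree, which has no such parent). -/
def rmlParentDeg : OTree → ℕ
  | .node [] => 0
  | .node (.node [] :: ts) => ts.length + 1
  | .node (.node (c :: cs) :: _) => rmlParentDeg (.node (c :: cs))

/-- `T` has the pony-tail if the rightmost child of the root has exactly one
child, which is a leaf. -/
def ponyTail : OTree → Prop
  | .node (.node [.node []] :: _) => True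
  | _ => False

end OTree

/-- `AppendLeaf T T'` holds when `T'` is obtained from `T` by attaching one
new leaf to some vertex of `T`, at some position among its children. -/
inductive AppendLeaf : OTree → OTree → Prop
  | root (l r : List OTree) :
      AppendLeaf (.node (l ++ r)) (.node (l ++ OTree.node [] :: r))
  | child (l r : List OTree) (t t' : OTree) :
      AppendLeaf t t' → AppendLeaf (.node (l ++ t :: r)) (.node (l ++ t' :: r))

/-- `DelApp T T'` holds when `T'` can be obtained from `T` by deleting one
leaf and then appending one new leaf somewhere (delete-and-append a leaf). -/
def DelApp (T T' : OTree) : Prop :=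
  ∃ S : OTree, AppendLeaf S T ∧ AppendLeaf S T'

/-- `CopyingAt T T' j` : `T` is copying `T'` at level `j`, i.e. `T'` is
obtained from `T` by appending a new leaf which becomes the rightmost leaf of
`T'` (namely forming `C T j`, whose rightmost path has `j` edges) and then
removing some other leaf. -/
def CopyingAt (T T' : OTree) (j : ℕ) : Prop :=
  T ≠ T' ∧ 1 ≤ j ∧ j ≤ T.rpl + 1 ∧ T'.rpl = j ∧ AppendLeaf T' (T.C j)

/-- `T` is copying `T'`. -/
def Copying (T T' : OTree) : Prop := ∃ j : ℕ, CopyingAt T T' j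




lemma not_appendLeaf_leaf' {t u : OTree} (h : AppendLeaf t u) : u ≠ .node [] := by
  cases h with
  | root l r => simp
  | child l r t t' h => simp

lemma appendLeaf_cons {ss ts : List OTree} (a : OTree)
    (h : AppendLeaf (.node ss) (.node ts)) :
    AppendLeaf (.node (a :: ss)) (.node (a :: ts)) := by
  cases h with
  | root l r => exact AppendLeaf.root (a :: l) r
  | child l r t t' h => exact AppendLeaf.child (a :: l) r t t' h

lemma rpl_eq_zero {t : OTree} (h : t.rpl = 0) : t = .node [] := by
  cases t with
  | node ts =>
    cases ts with
    | nil => rfl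
    | cons a l => simp [OTree.rpl] at h

lemma rpl_eq_one {t : OTree} (h : t.rpl = 1) :
    ∃ ts, t = .node (.node [] :: ts) := by
  cases t with
  | node ts =>
    cases ts with
    | nil => simp [OTree.rpl] at h
    | cons a l =>
      simp [OTree.rpl] at h
      exact ⟨l, by rw [rpl_eq_zero h]⟩

lemma appendLeaf_inv' {S u : OTree} (h : AppendLeaf S u) :
    ∀ ts : List OTree, u = .node (.node [] :: ts) →
    S = .node ts ∨
      ∃ ss, S = .node (.node [] :: ss) ∧ AppendLeaf (.node ss) (.node ts) := by
  cases h with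
  | root l r =>
    intro ts heq
    simp only [OTree.node.injEq] at heq
    cases l with
    | nil =>
      simp at heq
      left; rw [heq]; rfl
    | cons a l' =>
      simp at heq
      obtain ⟨ha, hts⟩ := heq
      right
      exact ⟨l' ++ r, by simp [ha], by rw [← hts]; exact AppendLeaf.root l' r⟩
  | child l r t t' h =>
    intro ts heq
    simp only [OTree.node.injEq] at heq
    cases l with
    | nil =>
      simp at heq
      exact absurd (heq.1 ▸ rfl) (not_appendLeaf_leaf' h)
    | cons a l' =>
      simp at heq
      obtain ⟨ha, hts⟩ := heq
      right
      exact ⟨l' ++ t :: r, by simp [ha], by rw [← hts]; exact AppendLeaf.child l' r t t' h⟩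

lemma appendLeaf_inv {S : OTree} {ts : List OTree}
    (h : AppendLeaf S (.node (.node [] :: ts))) :
    S = .node ts ∨
      ∃ ss, S = .node (.node [] :: ss) ∧ AppendLeaf (.node ss) (.node ts) :=
  appendLeaf_inv' h ts rfl

lemma appendLeaf_C2 (ts : List OTree) :
    AppendLeaf (.node (.node [] :: ts)) ((OTree.node (.node [] :: ts)).C 2) := by
  show AppendLeaf _ (.node (.node [.node []] :: ts))
  exact AppendLeaf.child [] ts (.node []) (.node [.node []]) (AppendLeaf.root [] [])

/-- If `rpl T₁ = rpl T₂ = 1` and `T₁` can be derived from `T₂` by deleting a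
leaf and appending a leaf, then `C T₁ 2` can be derived from `C T₂ 2` by
deleting a leaf and appending a leaf. -/
theorem stmt_11 (T₁ T₂ : OTree) (h1 : T₁.rpl = 1) (h2 : T₂.rpl = 1)
    (h : DelApp T₂ T₁) :
    DelApp (T₂.C 2) (T₁.C 2) := by
  obtain ⟨ts₁, rfl⟩ := rpl_eq_one h1
  obtain ⟨ts₂, rfl⟩ := rpl_eq_one h2
  obtain ⟨S, hS2, hS1⟩ := h
  have key : (∃ ss, AppendLeaf (OTree.node ss) (.node ts₂) ∧
      AppendLeaf (OTree.node ss) (.node ts₁)) ∨ ts₁ = ts₂ := by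
    rcases appendLeaf_inv hS2 with rfl | ⟨ss, rfl, h2'⟩
    · rcases appendLeaf_inv hS1 with h1' | ⟨ss, hss, h1'⟩
      · right
        exact ((OTree.node.injEq _ _).mp h1').symm
      · left
        refine ⟨ss, ?_, h1'⟩
        obtain rfl : ts₂ = .node [] :: ss := (OTree.node.injEq _ _).mp hss
        exact AppendLeaf.root [] ss
    · rcases appendLeaf_inv hS1 with h1' | ⟨ss', hss, h1'⟩
      · left
        refine ⟨ss, h2', ?_⟩
        obtain rfl : ts₁ = .node [] :: ss := ((OTree.node.injEq _ _).mp h1').symm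
        exact AppendLeaf.root [] ss
      · left
        obtain rfl : ss' = ss := by
          have := (OTree.node.injEq _ _).mp hss
          simpa using this.symm
        exact ⟨_, h2', h1'⟩
  rcases key with ⟨ss, h2', h1'⟩ | rfl
  · refine ⟨.node (.node [.node []] :: ss), ?_, ?_⟩
    · show AppendLeaf _ (.node (.node [.node []] :: ts₂))
      exact appendLeaf_cons _ h2'
    · show AppendLeaf _ (.node (.node [.node []] :: ts₁))
      exact appendLeaf_cons _ h1'
  · exact ⟨_, appendLeaf_C2 ts₁, appendLeaf_C2 ts₁⟩
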